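/- Let Q be a local ring of positive Krull dimension and R = Q[[X]]/(X²). Then the R-module R/(X) is totally reflexive and not free, and there are infinitely many pairwise non-isomorphic indecomposable totally reflexive R-modules. -/

import Mathlib

open CategoryTheory Opposite TensorProduct

universe u

noncomputable section

/-- `Ext^i_R(M, N) = 0`. -/
def ExtVanishes (R : Type u) [CommRing R] (M N : ModuleCat.{u} R) (i : ℕ) : Prop :=
  Subsingleton (((Ext R (ModuleCat.{u} R) i).obj (op M)).obj N)

/-- `Tor_i^R(M, N) = 0`. -/
def TorVanishes (R : Type u) [CommRing R] (M N : ModuleCat.{u} R) (i : ℕ) : Prop :=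
  Subsingleton (((Tor (ModuleCat.{u} R) i).obj M).obj N)

/-- `G` is totally reflexive: it is the cokernel of a differential in an exact complex `F`
of finitely generated free modules such that `Hom_R(F, R)` is also exact. -/
def IsTotallyReflexive (R : Type u) [CommRing R] (G : ModuleCat.{u} R) : Prop :=
  ∃ (F : ℤ → ModuleCat.{u} R) (d : ∀ i : ℤ, F (i + 1) ⟶ F i),
    (∀ i, Module.Free R (F i)) ∧ (∀ i, Module.Finite R (F i)) ∧
    (∀ i, LinearMap.range (d (i + 1)).hom = LinearMap.ker (d i).hom) ∧
    (∀ i, LinearMap.range (LinearMap.dualMap (d i).hom) =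
      LinearMap.ker (LinearMap.dualMap (d (i + 1)).hom)) ∧
    Nonempty (G ≃ₗ[R] (↥(F 0) ⧸ LinearMap.range (d 0).hom))

/-- `M` is an indecomposable module. -/
def IsIndecomposable (R : Type u) [CommRing R] (M : ModuleCat.{u} R) : Prop :=
  Nontrivial M ∧ ∀ Z W : Submodule R M, IsCompl Z W → Z = ⊥ ∨ W = ⊥

/-- The ring `R = Q⟦X⟧/(X²)`. -/
abbrev Rq (Q : Type u) [CommRing Q] : Type u :=
  (PowerSeries Q) ⧸ (Ideal.span {(PowerSeries.X : PowerSeries Q) ^ 2})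

/-- The image of `X` in `Q⟦X⟧/(X²)`. -/
def xR (Q : Type u) [CommRing Q] : Rq Q :=
  Ideal.Quotient.mk _ (PowerSeries.X : PowerSeries Q)

/-!
In `R = Q⟦X⟧/(X²)` the annihilator of `x` is `(x)`. Hence multiplication by `x` on `R`, and the
matrices `!![x, e; 0, x]`, `!![x, -e; 0, x]` acting alternately on `R²`, give periodic exact
complexes of free modules; their duals are given by the transposed matrices, which are conjugate to
the original ones by swapping the coordinates, so they are exact as well. Thus `R/(x)` and the
cokernels `M_c` of `!![x, -c; 0, x]`, `c ∈ Q`, are totally reflexive, and `R/(x)` is not free as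
it is killed by `x ≠ 0`.

As a `Q`-module `M_c = Q²`, with `x` acting by `N_c = !![0, c; 0, 0]`. An `R`-linear map
`M_c → M_c'` is a matrix `P` with `P N_c = N_c' P`. For `c ≠ 0` such an idempotent `P` over the
local ring `Q` is `0` or `1`, so `M_c` is indecomposable, and an isomorphism `M_c ≅ M_c'` forces
`c' ∣ c`. Since `dim Q > 0` there is a non-nilpotent `q` in the maximal ideal, and the `M_{q^m}`
are pairwise non-isomorphic.
-/

open Matrix

section ExactPairs

variable {R : Type*} [CommRing R]

lemma LinearEquiv.exact_conj_iff {M N : Type*} [AddCommGroup M] [Module R M] [AddCommGroup N]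
    [Module R N] (e : M ≃ₗ[R] N) (f g : Module.End R M) :
    Function.Exact (e.conj f) (e.conj g) ↔ Function.Exact f g := by
  rw [LinearEquiv.conj_apply, LinearEquiv.conj_apply, LinearEquiv.precomp_exact_iff_exact,
    LinearMap.comp_assoc, e.injective.comp_exact_iff_exact, LinearEquiv.conj_exact_iff_exact]

lemma Matrix.exact_dualMap_toLin'_iff {ι : Type*} [Fintype ι] [DecidableEq ι]
    (A B : Matrix ι ι R) :
    Function.Exact (toLin' A).dualMap (toLin' B).dualMap ↔
      Function.Exact (toLin' Aᵀ) (toLin' Bᵀ) := by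
  have hdual (C : Matrix ι ι R) :
      (toLin' C).dualMap = (dotProductEquiv R ι).conj (toLin' Cᵀ) := by
    rw [LinearEquiv.conj_apply, LinearEquiv.eq_comp_toLinearMap_symm]
    ext φ v
    simp
  rw [hdual, hdual, LinearEquiv.exact_conj_iff]

lemma Matrix.toLin'_reindex_eq_conj {ι : Type*} [Fintype ι] [DecidableEq ι]
    (σ : ι ≃ ι) (A : Matrix ι ι R) :
    toLin' (reindex σ σ A) = (LinearEquiv.funCongrLeft R R σ.symm).conj (toLin' A) := by
  rw [toLin'_reindex, LinearEquiv.conj_apply, LinearEquiv.funCongrLeft_symm, Equiv.symm_symm,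
    LinearMap.comp_assoc]

end ExactPairs

lemma isTotallyReflexive_of_exact {R : Type u} [CommRing R] {M G : Type u} [AddCommGroup M]
    [Module R M] [Module.Free R M] [Module.Finite R M] [AddCommGroup G] [Module R G]
    {f g : Module.End R M} (hfg : Function.Exact f g) (hgf : Function.Exact g f)
    (hfg' : Function.Exact f.dualMap g.dualMap) (hgf' : Function.Exact g.dualMap f.dualMap)
    (e : G ≃ₗ[R] M ⧸ LinearMap.range f) :
    IsTotallyReflexive R (ModuleCat.of R G) := by
  rw [LinearMap.exact_iff] at hfg hgf hfg' hgf'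
  refine ⟨fun _ => ModuleCat.of R M, fun i => ModuleCat.ofHom (if Even i then f else g),
    fun _ => ‹_›, fun _ => ‹_›, fun i => ?_, fun i => ?_, ⟨by simpa using e⟩⟩ <;>
  · by_cases hi : Even i <;> simp [← Int.not_even_iff_odd, *]

section SelfAnnihilating

variable {R : Type u} [CommRing R] {x : R}

lemma exact_smul_id_of_equiv (hx : ∀ y, x * y = 0 ↔ x ∣ y) {M : Type*} [AddCommGroup M]
    [Module R M] (e : R ≃ₗ[R] M) :
    Function.Exact (x • LinearMap.id : Module.End R M) (x • LinearMap.id : Module.End R M) := by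
  have hconj : e.conj (x • LinearMap.id) = x • LinearMap.id := by rw [map_smul, e.conj_id]
  rw [← hconj, e.exact_conj_iff]
  intro y
  simp [hx, dvd_def, eq_comm]

lemma exact_toLin'_upperTriangular (hx : ∀ y, x * y = 0 ↔ x ∣ y) (e : R) :
    Function.Exact (toLin' !![x, -e; 0, x]) (toLin' !![x, e; 0, x]) := by
  have hxx : x * x = 0 := (hx x).mpr dvd_rfl
  intro v
  constructor
  · obtain ⟨a, b, rfl⟩ : ∃ a b, v = ![a, b] := ⟨v 0, v 1, by ext i; fin_cases i <;> rfl⟩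
    intro hv
    have h0 : a * x + b * e = 0 := by simpa using congr_fun hv 0
    have h1 : b * x = 0 := by simpa using congr_fun hv 1
    obtain ⟨h, rfl⟩ := (hx b).mp (by linear_combination h1)
    obtain ⟨k, hk⟩ := (hx (a + e * h)).mp (by linear_combination h0)
    refine ⟨![k, h], ?_⟩
    ext i
    fin_cases i
    · simp
      linear_combination -hk
    · simp [mul_comm]
  · rintro ⟨w, rfl⟩
    rw [← toLin'_mul_apply, mul_fin_two]
    simp [hxx, mul_comm]

lemma exact_toLin'_transpose_upperTriangular (hx : ∀ y, x * y = 0 ↔ x ∣ y) (e : R) :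
    Function.Exact (toLin' !![x, -e; 0, x]ᵀ) (toLin' !![x, e; 0, x]ᵀ) := by
  have hswap (c : R) :
      !![x, c; 0, x]ᵀ = reindex (Equiv.swap 0 1) (Equiv.swap 0 1) !![x, c; 0, x] := by
    ext i j
    fin_cases i <;> fin_cases j <;> rfl
  rw [hswap, hswap, toLin'_reindex_eq_conj, toLin'_reindex_eq_conj, LinearEquiv.exact_conj_iff]
  exact exact_toLin'_upperTriangular hx e

theorem isTotallyReflexive_quotient_span_singleton (hx : ∀ y, x * y = 0 ↔ x ∣ y) :
    IsTotallyReflexive R (ModuleCat.of R (R ⧸ Ideal.span {x})) := by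
  have hdual : (x • LinearMap.id : Module.End R R).dualMap = x • LinearMap.id := by
    rw [LinearMap.dualMap_def, map_smul, ← LinearMap.dualMap_def, LinearMap.dualMap_id]
  have hrange : Ideal.span {x} = LinearMap.range (x • LinearMap.id : Module.End R R) := by
    rw [Ideal.span, LinearMap.span_singleton_eq_range]
    congr 1
    ext
    simp [mul_comm]
  have hR := exact_smul_id_of_equiv hx (LinearEquiv.refl R R)
  have hD := exact_smul_id_of_equiv hx (LinearMap.ringLmapEquivSelf R R R).symm
  exact isTotallyReflexive_of_exact hR hR (hdual ▸ hD) (hdual ▸ hD)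
    (Submodule.quotEquivOfEq _ _ hrange)

theorem isTotallyReflexive_of_upperTriangular (hx : ∀ y, x * y = 0 ↔ x ∣ y) (e : R)
    {G : Type u} [AddCommGroup G] [Module R G]
    (iso : G ≃ₗ[R] (Fin 2 → R) ⧸ LinearMap.range (toLin' !![x, e; 0, x])) :
    IsTotallyReflexive R (ModuleCat.of R G) := by
  have hfg := exact_toLin'_upperTriangular hx (-e)
  have hfg' := (exact_dualMap_toLin'_iff _ _).mpr (exact_toLin'_transpose_upperTriangular hx (-e))
  rw [neg_neg] at hfg hfg'
  exact isTotallyReflexive_of_exact hfg (exact_toLin'_upperTriangular hx e) hfg'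
    ((exact_dualMap_toLin'_iff _ _).mpr (exact_toLin'_transpose_upperTriangular hx e)) iso

end SelfAnnihilating

section NilpotentBlock

variable {Q : Type*} [CommRing Q]

lemma Matrix.dvd_of_mul_eq_one_of_mul_nilBlock {c c' : Q} {P P' : Matrix (Fin 2) (Fin 2) Q}
    (h : P' * P = 1) (hP' : P' * !![0, c'; 0, 0] = !![0, c; 0, 0] * P') : c' ∣ c := by
  have h11 := congr_fun₂ h 1 1
  have e00 := congr_fun₂ hP' 0 0
  have e01 := congr_fun₂ hP' 0 1
  simp [Matrix.mul_apply, Fin.sum_univ_two] at h11 e00 e01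
  exact ⟨P' 0 0 * P 1 1, by linear_combination (-c) * h11 - P 0 1 * e00 - P 1 1 * e01⟩

variable [IsLocalRing Q]

lemma mem_maximalIdeal_of_mul_eq_zero {c y : Q} (hc : c ≠ 0) (h : c * y = 0) :
    y ∈ IsLocalRing.maximalIdeal Q :=
  fun hy => hc ((hy.mul_left_eq_zero).mp h)

lemma Matrix.mem_maximalIdeal_of_commute_nilBlock {c : Q} (hc : c ≠ 0)
    {P : Matrix (Fin 2) (Fin 2) Q} (hPN : P * !![0, c; 0, 0] = !![0, c; 0, 0] * P) :
    P 1 0 ∈ IsLocalRing.maximalIdeal Q ∧ P 0 0 - P 1 1 ∈ IsLocalRing.maximalIdeal Q := by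
  have e00 := congr_fun₂ hPN 0 0
  have e01 := congr_fun₂ hPN 0 1
  simp [Matrix.mul_apply, Fin.sum_univ_two] at e00 e01
  exact ⟨mem_maximalIdeal_of_mul_eq_zero hc e00.symm,
    mem_maximalIdeal_of_mul_eq_zero hc (by linear_combination e01)⟩

lemma Matrix.eq_zero_of_isIdempotentElem_of_commute_nilBlock {c : Q} (hc : c ≠ 0)
    {P : Matrix (Fin 2) (Fin 2) Q} (hP : IsIdempotentElem P)
    (hPN : P * !![0, c; 0, 0] = !![0, c; 0, 0] * P) (h00 : P 0 0 ∈ IsLocalRing.maximalIdeal Q) :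
    P = 0 := by
  obtain ⟨h10, hdiag⟩ := mem_maximalIdeal_of_commute_nilBlock hc hPN
  have h11 : P 1 1 ∈ IsLocalRing.maximalIdeal Q := by simpa using Ideal.sub_mem _ h00 hdiag
  have hdet : IsUnit (1 - P).det := by
    have hm : P 0 0 + P 1 1 - P 0 0 * P 1 1 + P 0 1 * P 1 0 ∈ IsLocalRing.maximalIdeal Q :=
      Ideal.add_mem _ (Ideal.sub_mem _ (Ideal.add_mem _ h00 h11) (Ideal.mul_mem_right _ _ h00))
        (Ideal.mul_mem_left _ _ h10)
    convert IsLocalRing.isUnit_one_sub_self_of_mem_nonunits _ hm using 1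
    simp [det_fin_two]
    ring
  exact ((isUnit_iff_isUnit_det _).mpr hdet).mul_left_eq_zero.mp hP.mul_one_sub_self

lemma Matrix.eq_zero_or_eq_one_of_isIdempotentElem_of_commute_nilBlock {c : Q} (hc : c ≠ 0)
    {P : Matrix (Fin 2) (Fin 2) Q} (hP : IsIdempotentElem P)
    (hPN : P * !![0, c; 0, 0] = !![0, c; 0, 0] * P) : P = 0 ∨ P = 1 := by
  have h00 := congr_fun₂ hP 0 0
  simp [Matrix.mul_apply, Fin.sum_univ_two] at h00
  have hprod : P 0 0 * (1 - P 0 0) ∈ IsLocalRing.maximalIdeal Q := by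
    have := Ideal.mul_mem_left _ (P 0 1) (mem_maximalIdeal_of_commute_nilBlock hc hPN).1
    convert this using 1
    linear_combination -h00
  rcases (IsLocalRing.maximalIdeal.isMaximal Q).isPrime.mem_or_mem hprod with h | h
  · exact Or.inl (eq_zero_of_isIdempotentElem_of_commute_nilBlock hc hP hPN h)
  · refine Or.inr (sub_eq_zero.mp (eq_zero_of_isIdempotentElem_of_commute_nilBlock hc hP.one_sub
      (by rw [sub_mul, mul_sub, one_mul, mul_one, hPN]) (by simpa using h))).symm

end NilpotentBlock

lemma not_free_quotient_span_singleton {R : Type*} [CommRing R] {x : R} (hx0 : x ≠ 0)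
    (hxu : ¬IsUnit x) : ¬Module.Free R (R ⧸ Ideal.span {x}) := by
  intro
  have : Nontrivial (R ⧸ Ideal.span {x}) :=
    Ideal.Quotient.nontrivial_iff.mpr (Ideal.span_singleton_eq_top.not.mpr hxu)
  have hann : Module.annihilator R (R ⧸ Ideal.span {x}) = ⊥ :=
    Module.annihilator_eq_bot.mpr inferInstance
  rw [Ideal.annihilator_quotient, Ideal.span_singleton_eq_bot] at hann
  exact hx0 hann

section LocalRing

variable {Q : Type*} [CommRing Q] [IsLocalRing Q]

lemma exists_mem_maximalIdeal_not_isNilpotent (hdim : 0 < ringKrullDim Q) :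
    ∃ q ∈ IsLocalRing.maximalIdeal Q, ¬IsNilpotent q := by
  by_contra! h
  have hnil : ∀ x : Q, IsNilpotent x ↔ ¬IsUnit x := fun x =>
    ⟨IsNilpotent.not_isUnit, fun hx => h x ((IsLocalRing.mem_maximalIdeal x).mpr hx)⟩
  have : Ring.KrullDimLE 0 Q :=
    (((Ring.krullDimLE_zero_and_isLocalRing_tfae Q).out 2 0 rfl rfl).mp hnil).1
  exact hdim.not_ge (Ring.krullDimLE_iff.mp this)

lemma not_pow_dvd_pow_of_lt {q : Q} (hqm : q ∈ IsLocalRing.maximalIdeal Q) (hq : ¬IsNilpotent q)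
    {n m : ℕ} (hnm : n < m) : ¬q ^ m ∣ q ^ n := by
  rintro ⟨t, ht⟩
  have hunit : IsUnit (1 - q ^ (m - n) * t) := IsLocalRing.isUnit_one_sub_self_of_mem_nonunits _
    (Ideal.mul_mem_right _ _ (Ideal.pow_mem_of_mem _ hqm _ (Nat.sub_pos_of_lt hnm)))
  refine hq ⟨n, hunit.mul_left_eq_zero.mp ?_⟩
  rw [mul_sub, mul_one, ← mul_assoc, ← pow_add, Nat.add_sub_cancel' hnm.le, ← ht, sub_self]

end LocalRing

lemma Submodule.eq_bot_or_eq_bot_of_isCompl {R M : Type*} [Ring R] [AddCommGroup M] [Module R M]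
    (h : ∀ p : Module.End R M, IsIdempotentElem p → p = 0 ∨ p = 1) {Z W : Submodule R M}
    (hZW : IsCompl Z W) : Z = ⊥ ∨ W = ⊥ := by
  refine (h _ (isIdempotentElem_projection hZW)).imp (fun h0 => ?_) (fun h1 => ?_)
  · rw [← range_projection hZW, h0, LinearMap.range_zero]
  · rw [← ker_projection hZW, h1, Module.End.one_eq_id, LinearMap.ker_id]

namespace Rq

open PowerSeries

variable {Q : Type u} [CommRing Q]

lemma mk_eq_zero_iff {f : PowerSeries Q} :
    Ideal.Quotient.mk (Ideal.span {X ^ 2}) f = 0 ↔ coeff 0 f = 0 ∧ coeff 1 f = 0 := by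
  rw [Ideal.Quotient.eq_zero_iff_mem, Ideal.mem_span_singleton, X_pow_dvd_iff]
  constructor
  · intro h
    exact ⟨h 0 (by norm_num), h 1 (by norm_num)⟩
  · rintro ⟨h0, h1⟩ i hi
    interval_cases i <;> assumption

lemma xR_mul_self : xR Q * xR Q = 0 := by
  rw [xR, ← map_mul, ← sq, Ideal.Quotient.eq_zero_iff_mem]
  exact Ideal.mem_span_singleton_self _

lemma algebraMap_add_mul_xR (a b : Q) :
    algebraMap Q (Rq Q) a + algebraMap Q (Rq Q) b * xR Q =
      Ideal.Quotient.mk (Ideal.span {X ^ 2}) (C a + C b * X) := by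
  simp [xR, ← Ideal.Quotient.mk_algebraMap]

lemma algebraMap_add_mul_xR_eq_zero_iff {a b : Q} :
    algebraMap Q (Rq Q) a + algebraMap Q (Rq Q) b * xR Q = 0 ↔ a = 0 ∧ b = 0 := by
  rw [algebraMap_add_mul_xR, mk_eq_zero_iff]
  simp [coeff_C]

lemma exists_algebraMap_add_mul_xR (r : Rq Q) :
    ∃ a b : Q, algebraMap Q (Rq Q) a + algebraMap Q (Rq Q) b * xR Q = r := by
  obtain ⟨f, rfl⟩ := Ideal.Quotient.mk_surjective r
  refine ⟨coeff 0 f, coeff 1 f, ?_⟩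
  rw [algebraMap_add_mul_xR, Ideal.Quotient.eq, ← Ideal.Quotient.eq_zero_iff_mem, mk_eq_zero_iff]
  simp [coeff_C]

lemma xR_mul_eq_zero_iff (r : Rq Q) : xR Q * r = 0 ↔ xR Q ∣ r := by
  constructor
  · obtain ⟨a, b, rfl⟩ := exists_algebraMap_add_mul_xR r
    intro h
    obtain rfl : a = 0 := (algebraMap_add_mul_xR_eq_zero_iff (a := 0)).mp (by
      rw [map_zero]; linear_combination h - algebraMap Q (Rq Q) b * xR_mul_self (Q := Q)) |>.2
    exact ⟨algebraMap Q (Rq Q) b, by simp [mul_comm]⟩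
  · rintro ⟨t, rfl⟩
    rw [← mul_assoc, xR_mul_self, zero_mul]

lemma xR_ne_zero [Nontrivial Q] : xR Q ≠ 0 := by
  simpa using (algebraMap_add_mul_xR_eq_zero_iff (Q := Q) (a := 0) (b := 1)).not.mpr (by simp)

variable {A : Type*} [Ring A] [Algebra Q A]

def lift (a : A) (ha : a * a = 0) : Rq Q →ₐ[Q] A :=
  Ideal.Quotient.liftₐ _
    { toFun f := coeff 0 f • 1 + coeff 1 f • a
      map_one' := by simp [coeff_one]
      map_mul' f g := by
        simp only [coeff_zero_eq_constantCoeff_apply, map_mul, coeff_one_mul, add_mul, mul_add,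
          smul_mul_smul, one_mul, mul_one, ha, smul_zero]
        module
      map_zero' := by simp
      map_add' f g := by simp only [map_add, add_smul]; abel
      commutes' r := by simp [coeff_C, Algebra.algebraMap_eq_smul_one] }
    (fun f hf => by
      obtain ⟨h0, h1⟩ := mk_eq_zero_iff.mp (Ideal.Quotient.eq_zero_iff_mem.mpr hf)
      change coeff 0 f • (1 : A) + coeff 1 f • a = 0
      simp [h0, h1])

lemma lift_xR (a : A) (ha : a * a = 0) : lift a ha (xR Q) = a := by
  simp [lift, xR, coeff_X]

end Rq

lemma toLin'_nilBlock_mul_self {Q : Type*} [CommRing Q] (c : Q) :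
    toLin' !![0, c; 0, 0] * toLin' !![0, c; 0, 0] = 0 := by
  rw [Module.End.mul_eq_comp, ← toLin'_mul, mul_fin_two]
  simpa using (eta_fin_two (0 : Matrix (Fin 2) (Fin 2) Q)).symm

/-- The cokernel of `!![xR Q, -c; 0, xR Q]` (see `JordanModule.presentation`), realised as `Q²`
with `xR Q` acting by `!![0, c; 0, 0]`. -/
def JordanModule {Q : Type u} [CommRing Q] (_c : Q) : Type u := Fin 2 → Q

namespace JordanModule

variable {Q : Type u} [CommRing Q] (c : Q)

instance : AddCommGroup (JordanModule c) := inferInstanceAs (AddCommGroup (Fin 2 → Q))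

instance : Module Q (JordanModule c) := inferInstanceAs (Module Q (Fin 2 → Q))

instance : Module (Rq Q) (JordanModule c) :=
  Module.compHom (Fin 2 → Q) (Rq.lift _ (toLin'_nilBlock_mul_self c)).toRingHom

variable {c}

lemma smul_def (r : Rq Q) (v : JordanModule c) :
    r • v = Rq.lift _ (toLin'_nilBlock_mul_self c) r v := rfl

instance : IsScalarTower Q (Rq Q) (JordanModule c) where
  smul_assoc a r v := by simp [smul_def]; rfl

lemma algebraMap_smul (a : Q) (v : JordanModule c) : algebraMap Q (Rq Q) a • v = a • v := by
  simp

variable (c) in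
def ofFun : (Fin 2 → Q) ≃ₗ[Q] JordanModule c := LinearEquiv.refl Q (Fin 2 → Q)

lemma xR_smul_ofFun (v : Fin 2 → Q) : xR Q • ofFun c v = ofFun c (!![0, c; 0, 0] *ᵥ v) := by
  rw [smul_def, Rq.lift_xR]
  rfl

variable (c) in
def basis : Module.Basis (Fin 2) Q (JordanModule c) := (Pi.basisFun Q (Fin 2)).map (ofFun c)

lemma basis_apply (i : Fin 2) : basis c i = ofFun c (Pi.single i 1) := by
  simp [basis]

lemma xR_smul_basis_zero : xR Q • basis c 0 = 0 := by
  have hcol : !![0, c; 0, 0] *ᵥ Pi.single 0 1 = 0 := by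
    ext i
    fin_cases i <;> simp
  rw [basis_apply, xR_smul_ofFun, hcol, map_zero]

lemma xR_smul_basis_one : xR Q • basis c 1 = c • basis c 0 := by
  have hcol : !![0, c; 0, 0] *ᵥ Pi.single 1 1 = c • Pi.single 0 1 := by
    ext i
    fin_cases i <;> simp
  rw [basis_apply, basis_apply, xR_smul_ofFun, hcol, map_smul]

variable (c) in
def proj : (Fin 2 → Rq Q) →ₗ[Rq Q] JordanModule c :=
  Fintype.linearCombination (Rq Q) (basis c)

lemma proj_algebraMap_add_mul_xR (a b : Fin 2 → Q) :
    proj c (fun i => algebraMap Q (Rq Q) (a i) + algebraMap Q (Rq Q) (b i) * xR Q) =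
      (a 0 + c * b 1) • basis c 0 + a 1 • basis c 1 := by
  simp only [proj, Fintype.linearCombination_apply, Fin.sum_univ_two, add_smul, mul_smul,
    algebraMap_smul, xR_smul_basis_zero, xR_smul_basis_one]
  module

lemma proj_surjective : Function.Surjective (proj c) := by
  intro v
  refine ⟨fun i => algebraMap Q (Rq Q) ((basis c).repr v i), ?_⟩
  have h := proj_algebraMap_add_mul_xR (c := c) ((basis c).repr v) 0
  simp only [Pi.zero_apply, map_zero, zero_mul, add_zero, mul_zero] at h
  rw [h, ← Fin.sum_univ_two (f := fun i => (basis c).repr v i • basis c i), (basis c).sum_repr]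

lemma ker_proj :
    LinearMap.ker (proj c) =
      LinearMap.range (toLin' !![xR Q, -algebraMap Q (Rq Q) c; 0, xR Q]) := by
  refine le_antisymm (fun w hw => ?_) (LinearMap.range_le_ker_iff.mpr ?_)
  · choose a b hab using fun i => Rq.exists_algebraMap_add_mul_xR (w i)
    obtain rfl : w = fun i => algebraMap Q (Rq Q) (a i) + algebraMap Q (Rq Q) (b i) * xR Q :=
      funext fun i => (hab i).symm
    rw [LinearMap.mem_ker, proj_algebraMap_add_mul_xR] at hw
    have h0 : a 0 + c * b 1 = 0 := by simpa using congr_arg (fun v => (basis c).repr v 0) hw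
    have h1 : a 1 = 0 := by simpa using congr_arg (fun v => (basis c).repr v 1) hw
    refine ⟨![algebraMap Q (Rq Q) (b 0), algebraMap Q (Rq Q) (b 1)], funext fun i => ?_⟩
    fin_cases i
    · simp [eq_neg_of_add_eq_zero_left h0, -_root_.algebraMap_smul]
      ring
    · simp [h1, -_root_.algebraMap_smul, mul_comm]
  · refine LinearMap.pi_ext' fun i => LinearMap.ext_ring ?_
    fin_cases i
    · simp [proj, Fin.sum_univ_two, Fintype.linearCombination_apply, xR_smul_basis_zero]
      exact zero_smul (Rq Q) (basis c 1)
    · simp [proj, Fin.sum_univ_two, Fintype.linearCombination_apply, xR_smul_basis_one]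

variable (c) in
def presentation :
    JordanModule c ≃ₗ[Rq Q]
      (Fin 2 → Rq Q) ⧸ LinearMap.range (toLin' !![xR Q, -algebraMap Q (Rq Q) c; 0, xR Q]) :=
  ((proj c).quotKerEquivOfSurjective proj_surjective).symm.trans
    (Submodule.quotEquivOfEq _ _ ker_proj)

variable (c) in
theorem isTotallyReflexive : IsTotallyReflexive (Rq Q) (ModuleCat.of (Rq Q) (JordanModule c)) :=
  isTotallyReflexive_of_upperTriangular Rq.xR_mul_eq_zero_iff _ (presentation c)

variable {c' c'' : Q}

def toMatrix (φ : JordanModule c →ₗ[Rq Q] JordanModule c') : Matrix (Fin 2) (Fin 2) Q :=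
  LinearMap.toMatrix (basis c) (basis c') (φ.restrictScalars Q)

lemma toMatrix_comp (φ : JordanModule c' →ₗ[Rq Q] JordanModule c'')
    (ψ : JordanModule c →ₗ[Rq Q] JordanModule c') :
    toMatrix (φ ∘ₗ ψ) = toMatrix φ * toMatrix ψ := by
  rw [toMatrix, LinearMap.restrictScalars_comp, LinearMap.toMatrix_comp _ (basis c')]
  rfl

lemma toMatrix_id : toMatrix (LinearMap.id : JordanModule c →ₗ[Rq Q] JordanModule c) = 1 :=
  LinearMap.toMatrix_id _

lemma toMatrix_injective :
    Function.Injective (toMatrix : (JordanModule c →ₗ[Rq Q] JordanModule c') → _) :=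
  (LinearMap.toMatrix _ _).injective.comp (LinearMap.restrictScalars_injective Q)

lemma toMatrix_xR_smul_id :
    toMatrix (xR Q • LinearMap.id : Module.End (Rq Q) (JordanModule c)) = !![0, c; 0, 0] := by
  ext i j
  fin_cases i <;> fin_cases j <;>
    simp [toMatrix, LinearMap.toMatrix_apply, xR_smul_basis_zero, xR_smul_basis_one]

lemma toMatrix_mul_nilBlock (φ : JordanModule c →ₗ[Rq Q] JordanModule c') :
    toMatrix φ * !![0, c; 0, 0] = !![0, c'; 0, 0] * toMatrix φ := by
  rw [← toMatrix_xR_smul_id, ← toMatrix_xR_smul_id, ← toMatrix_comp, ← toMatrix_comp]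
  congr 1
  ext v
  simp

theorem isIndecomposable [IsLocalRing Q] (hc : c ≠ 0) :
    IsIndecomposable (Rq Q) (ModuleCat.of (Rq Q) (JordanModule c)) := by
  refine ⟨inferInstanceAs (Nontrivial (Fin 2 → Q)),
    fun Z W => Submodule.eq_bot_or_eq_bot_of_isCompl fun p hp => ?_⟩
  have hP : IsIdempotentElem (toMatrix p) := by
    rw [IsIdempotentElem, ← toMatrix_comp, ← Module.End.mul_eq_comp, hp.eq]
  refine (Matrix.eq_zero_or_eq_one_of_isIdempotentElem_of_commute_nilBlock hc hP
    (toMatrix_mul_nilBlock p)).imp (fun h0 => toMatrix_injective ?_)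
      (fun h1 => toMatrix_injective ?_)
  · rw [h0, toMatrix, LinearMap.restrictScalars_zero, map_zero]
  · rw [h1, Module.End.one_eq_id, toMatrix_id]

lemma dvd_of_linearEquiv (ψ : JordanModule c ≃ₗ[Rq Q] JordanModule c') : c' ∣ c :=
  Matrix.dvd_of_mul_eq_one_of_mul_nilBlock
    (by rw [← toMatrix_comp, ψ.symm_comp, toMatrix_id])
    (toMatrix_mul_nilBlock ψ.symm.toLinearMap)

end JordanModule

theorem powerSeries_mod_X_sq_general
    (Q : Type u) [CommRing Q] [IsLocalRing Q]
    (hdim : 0 < ringKrullDim Q) :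
    IsTotallyReflexive (Rq Q)
      (ModuleCat.of (Rq Q) ((Rq Q) ⧸ (Ideal.span {xR Q}))) ∧
    ¬ Module.Free (Rq Q) ((Rq Q) ⧸ (Ideal.span {xR Q})) ∧
    ∃ G : ℕ → ModuleCat.{u} (Rq Q),
      (∀ m, IsTotallyReflexive (Rq Q) (G m) ∧ IsIndecomposable (Rq Q) (G m)) ∧
      ∀ m m', m ≠ m' → IsEmpty (G m ≃ₗ[Rq Q] G m') := by
  have : Nontrivial (Rq Q) := nontrivial_of_ne _ _ Rq.xR_ne_zero
  refine ⟨isTotallyReflexive_quotient_span_singleton Rq.xR_mul_eq_zero_iff,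
    not_free_quotient_span_singleton Rq.xR_ne_zero
      (IsNilpotent.not_isUnit ⟨2, by rw [sq, Rq.xR_mul_self]⟩), ?_⟩
  obtain ⟨q, hqm, hq⟩ := exists_mem_maximalIdeal_not_isNilpotent hdim
  refine ⟨fun m => ModuleCat.of (Rq Q) (JordanModule (q ^ m)), fun m =>
    ⟨JordanModule.isTotallyReflexive _, JordanModule.isIndecomposable fun h => hq ⟨m, h⟩⟩,
    fun m m' hne => ⟨fun ψ => ?_⟩⟩
  rcases hne.lt_or_gt with h | h
  · exact not_pow_dvd_pow_of_lt hqm hq h (JordanModule.dvd_of_linearEquiv ψ)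
  · exact not_pow_dvd_pow_of_lt hqm hq h (JordanModule.dvd_of_linearEquiv ψ.symm)

/-- For `Q` local of positive Krull dimension and `R = Q⟦X⟧/(X²)`: the module `R/(X)`
is totally reflexive and not free, and there are infinitely many pairwise
non-isomorphic indecomposable totally reflexive `R`-modules. -/
theorem powerSeries_mod_X_sq
    (Q : Type u) [CommRing Q] [IsLocalRing Q] [IsNoetherianRing Q]
    (hdim : 0 < ringKrullDim Q) :
    IsTotallyReflexive (Rq Q)
      (ModuleCat.of (Rq Q) ((Rq Q) ⧸ (Ideal.span {xR Q}))) ∧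
    ¬ Module.Free (Rq Q) ((Rq Q) ⧸ (Ideal.span {xR Q})) ∧
    ∃ G : ℕ → ModuleCat.{u} (Rq Q),
      (∀ m, IsTotallyReflexive (Rq Q) (G m) ∧ IsIndecomposable (Rq Q) (G m)) ∧
      ∀ m m', m ≠ m' → IsEmpty (G m ≃ₗ[Rq Q] G m') :=
  powerSeries_mod_X_sq_general Q hdim
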